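/- Let f_1 and f_2 be polymatroid rank functions on the same finite ground set E, and let α > 0. Then the Minkowski sums satisfy P(f_1) + P(f_2) = P(f_1 + f_2) and B(f_1) + B(f_2) = B(f_1 + f_2); moreover P(α f) = α · P(f) and B(α f) = α · B(f) for any polymatroid rank function f on E. -/

import Mathlib

open Pointwise

/-- The independence polytope of a set function on a finite ground set. -/
def indepP {E : Type*} [Fintype E] (f : Finset E → ℝ) : Set (E → ℝ) :=
  {x | (∀ i, 0 ≤ x i) ∧ ∀ S : Finset E, ∑ i ∈ S, x i ≤ f S}

/-- The base polytope of a set function on a finite ground set. -/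
def baseB {E : Type*} [Fintype E] (f : Finset E → ℝ) : Set (E → ℝ) :=
  {x ∈ indepP f | ∑ i, x i = f Finset.univ}

/-!
The inclusions `⊆` and the scaling identities follow directly from the defining inequalities.
For `⊇`, the Minkowski sums are compact and convex, so by separation it suffices that every
linear functional `w` is at least `w ⬝ᵥ x` somewhere on the sum. Order the ground set so that `w`
decreases. Edmonds' greedy vector for this order lies in `B(f)`, is additive in `f`, and by Abel
summation maximizes `w` over `B(f)` (and over `P(f)` once truncated to the coordinates where
`w > 0`). Hence the maximizer for `f₁ + f₂` is the sum of those for `f₁` and `f₂`, a point of the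
Minkowski sum.
-/

open Finset Function Matrix

section Polytopes

variable {E : Type*} [Fintype E]

theorem mem_indepP_of_le {f : Finset E → ℝ} {x y : E → ℝ} (hy : 0 ≤ y) (hyx : y ≤ x)
    (hx : x ∈ indepP f) : y ∈ indepP f :=
  ⟨hy, fun S => (sum_le_sum fun i _ => hyx i).trans (hx.2 S)⟩

theorem add_indepP_subset (f₁ f₂ : Finset E → ℝ) :
    indepP f₁ + indepP f₂ ⊆ indepP (f₁ + f₂) := by
  rintro _ ⟨a, ha, b, hb, rfl⟩
  refine ⟨fun i => add_nonneg (ha.1 i) (hb.1 i), fun S => ?_⟩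
  simpa only [Pi.add_apply, sum_add_distrib] using add_le_add (ha.2 S) (hb.2 S)

theorem add_baseB_subset (f₁ f₂ : Finset E → ℝ) :
    baseB f₁ + baseB f₂ ⊆ baseB (f₁ + f₂) := by
  rintro _ ⟨a, ha, b, hb, rfl⟩
  refine ⟨add_indepP_subset f₁ f₂ ⟨a, ha.1, b, hb.1, rfl⟩, ?_⟩
  simp only [Pi.add_apply, sum_add_distrib, ha.2, hb.2]

theorem smul_mem_indepP {f : Finset E → ℝ} {x : E → ℝ} {c : ℝ} (hc : 0 ≤ c)
    (hx : x ∈ indepP f) : c • x ∈ indepP (fun S => c * f S) := by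
  refine ⟨fun i => mul_nonneg hc (hx.1 i), fun S => ?_⟩
  simpa only [Pi.smul_apply, smul_eq_mul, ← mul_sum] using mul_le_mul_of_nonneg_left (hx.2 S) hc

theorem smul_mem_baseB {f : Finset E → ℝ} {x : E → ℝ} {c : ℝ} (hc : 0 ≤ c)
    (hx : x ∈ baseB f) : c • x ∈ baseB (fun S => c * f S) := by
  refine ⟨smul_mem_indepP hc hx.1, ?_⟩
  simp only [Pi.smul_apply, smul_eq_mul, ← mul_sum, hx.2]

theorem indepP_mul {f : Finset E → ℝ} {α : ℝ} (hα : 0 < α) :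
    indepP (fun S => α * f S) = α • indepP f := by
  ext x
  rw [Set.mem_smul_set_iff_inv_smul_mem₀ hα.ne']
  refine ⟨fun hx => ?_, fun hx => ?_⟩
  · simpa only [inv_mul_cancel_left₀ hα.ne'] using smul_mem_indepP (inv_nonneg.2 hα.le) hx
  · simpa only [smul_inv_smul₀ hα.ne'] using smul_mem_indepP hα.le hx

theorem baseB_mul {f : Finset E → ℝ} {α : ℝ} (hα : 0 < α) :
    baseB (fun S => α * f S) = α • baseB f := by
  ext x
  rw [Set.mem_smul_set_iff_inv_smul_mem₀ hα.ne']
  refine ⟨fun hx => ?_, fun hx => ?_⟩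
  · simpa only [inv_mul_cancel_left₀ hα.ne'] using smul_mem_baseB (inv_nonneg.2 hα.le) hx
  · simpa only [smul_inv_smul₀ hα.ne'] using smul_mem_baseB hα.le hx

theorem indepP_eq_iInter (f : Finset E → ℝ) :
    indepP f = (⋂ i, {x | 0 ≤ x i}) ∩ ⋂ S : Finset E, {x | ∑ i ∈ S, x i ≤ f S} := by
  ext x
  simp [indepP]

theorem baseB_eq_inter (f : Finset E → ℝ) :
    baseB f = indepP f ∩ {x | ∑ i, x i = f univ} :=
  rfl

theorem convex_indepP (f : Finset E → ℝ) : Convex ℝ (indepP f) := by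
  rw [indepP_eq_iInter]
  exact (convex_iInter fun i => convex_halfSpace_ge (LinearMap.proj i).isLinear 0).inter
    (convex_iInter fun S => by
      simpa using convex_halfSpace_le (∑ i ∈ S, LinearMap.proj (R := ℝ) i).isLinear (f S))

theorem convex_baseB (f : Finset E → ℝ) : Convex ℝ (baseB f) := by
  rw [baseB_eq_inter]
  exact (convex_indepP f).inter <| by
    simpa using convex_hyperplane (∑ i, LinearMap.proj (R := ℝ) i).isLinear (f univ)

theorem isClosed_indepP (f : Finset E → ℝ) : IsClosed (indepP f) := by
  rw [indepP_eq_iInter]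
  exact (isClosed_iInter fun i => isClosed_le continuous_const (continuous_apply i)).inter
    (isClosed_iInter fun S => isClosed_le (by fun_prop) continuous_const)

theorem isCompact_indepP (f : Finset E → ℝ) : IsCompact (indepP f) := by
  refine (isCompact_univ_pi fun i => isCompact_Icc (a := 0) (b := f {i})).of_isClosed_subset
    (isClosed_indepP f) fun x hx => Set.mem_univ_pi.2 fun i => ⟨hx.1 i, ?_⟩
  simpa using hx.2 {i}

theorem isCompact_baseB (f : Finset E → ℝ) : IsCompact (baseB f) :=
  (isCompact_indepP f).of_isClosed_subset
    ((isClosed_indepP f).inter (isClosed_eq (by fun_prop) continuous_const)) fun _ hx => hx.1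

end Polytopes

structure IsPolymatroidRank {E : Type*} [DecidableEq E] (f : Finset E → ℝ) : Prop where
  map_empty : f ∅ = 0
  mono : ∀ A B : Finset E, A ⊆ B → f A ≤ f B
  submodular : ∀ A B : Finset E, f (A ∪ B) + f (A ∩ B) ≤ f A + f B

theorem exists_injective_antivary {E β : Type*} [Countable E] [LinearOrder β]
    (w : E → β) : ∃ σ : E → βᵒᵈ ×ₗ ℕ, Injective σ ∧ Antivary w σ := by
  obtain ⟨ι, hι⟩ := Countable.exists_injective_nat E
  refine ⟨fun i => toLex (OrderDual.toDual (w i), ι i), fun i j h => hι (congrArg (·.2) h),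
    fun i j h => ?_⟩
  rcases Prod.Lex.lt_iff.1 h with h | ⟨h, -⟩
  · exact le_of_lt h
  · exact le_of_eq h.symm

section Greedy

variable {E α : Type*} [Fintype E] [LinearOrder α] {σ : E → α}

def below (σ : E → α) (i : E) : Finset E := {j | σ j < σ i}

def IsInitialSeg (σ : E → α) (S : Finset E) : Prop :=
  ∀ ⦃i⦄, i ∈ S → below σ i ⊆ S

@[simp] theorem mem_below {i j : E} : j ∈ below σ i ↔ σ j < σ i := by
  simp [below]

theorem notMem_below_self (i : E) : i ∉ below σ i := by
  simp

theorem isInitialSeg_univ : IsInitialSeg σ univ := fun _ _ _ _ => mem_univ _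

theorem isInitialSeg_below (i : E) : IsInitialSeg σ (below σ i) := fun _ hj _ hk =>
  mem_below.2 ((mem_below.1 hk).trans (mem_below.1 hj))

theorem subset_below_of_forall_le (hσ : Injective σ) {a : E} {s : Finset E} (ha : a ∉ s)
    (hs : ∀ x ∈ s, σ x ≤ σ a) : s ⊆ below σ a := fun x hx =>
  mem_below.2 ((hs x hx).lt_of_ne (hσ.ne (ne_of_mem_of_not_mem hx ha)))

variable [DecidableEq E]

def greedyVec (σ : E → α) (f : Finset E → ℝ) : E → ℝ :=
  fun i => f (insert i (below σ i)) - f (below σ i)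

theorem isInitialSeg_insert_below (i : E) : IsInitialSeg σ (insert i (below σ i)) := by
  intro j hj k hk
  rcases mem_insert.1 hj with rfl | hj
  · exact mem_insert_of_mem hk
  · exact mem_insert_of_mem (isInitialSeg_below i hj hk)

/-- For injective `σ`, every nonempty initial segment is `insert a (below σ a)` for its
maximum `a`. -/
@[elab_as_elim]
theorem IsInitialSeg.induction (hσ : Injective σ) {p : Finset E → Prop} (h0 : p ∅)
    (hstep : ∀ a, p (below σ a) → p (insert a (below σ a))) {S : Finset E}
    (hS : IsInitialSeg σ S) : p S := by
  induction S using Finset.induction_on_max_value σ with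
  | empty => exact h0
  | insert a s ha hmax ih =>
    have hs : s = below σ a := by
      refine (subset_below_of_forall_le hσ ha hmax).antisymm fun x hx => ?_
      have hxa : x ≠ a := ne_of_mem_of_not_mem hx (notMem_below_self a)
      exact (mem_insert.1 (hS (mem_insert_self a s) hx)).resolve_left hxa
    subst hs
    exact hstep a (ih (isInitialSeg_below a))

theorem sum_greedyVec_of_isInitialSeg (hσ : Injective σ) {f : Finset E → ℝ} (hf0 : f ∅ = 0)
    {S : Finset E} (hS : IsInitialSeg σ S) : ∑ i ∈ S, greedyVec σ f i = f S := by
  refine IsInitialSeg.induction hσ ?_ ?_ hS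
  · simp [hf0]
  · intro a ih
    rw [sum_insert (notMem_below_self a), ih, greedyVec, sub_add_cancel]

theorem sum_greedyVec_le (hσ : Injective σ) {f : Finset E → ℝ} (hf0 : f ∅ = 0)
    (hsub : ∀ A B : Finset E, f (A ∪ B) + f (A ∩ B) ≤ f A + f B) (S : Finset E) :
    ∑ i ∈ S, greedyVec σ f i ≤ f S := by
  induction S using Finset.induction_on_max_value σ with
  | empty => simp [hf0]
  | insert a s ha hmax ih =>
    have hs := subset_below_of_forall_le hσ ha hmax
    have h := hsub (insert a s) (below σ a)
    rw [insert_union, union_eq_right.2 hs, insert_inter_of_notMem (notMem_below_self a),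
      inter_eq_left.2 hs] at h
    rw [sum_insert ha, greedyVec]
    linarith

theorem greedyVec_nonneg {f : Finset E → ℝ} (hmono : ∀ A B : Finset E, A ⊆ B → f A ≤ f B) :
    0 ≤ greedyVec σ f := fun i =>
  sub_nonneg.2 (hmono _ _ (subset_insert i _))

theorem greedyVec_mem_baseB (hσ : Injective σ) {f : Finset E → ℝ} (hf : IsPolymatroidRank f) :
    greedyVec σ f ∈ baseB f :=
  ⟨⟨greedyVec_nonneg hf.mono, sum_greedyVec_le hσ hf.map_empty hf.submodular⟩,
    sum_greedyVec_of_isInitialSeg hσ hf.map_empty isInitialSeg_univ⟩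

theorem indicator_greedyVec_mem_indepP (hσ : Injective σ) {f : Finset E → ℝ}
    (hf : IsPolymatroidRank f) (s : Set E) : s.indicator (greedyVec σ f) ∈ indepP f :=
  mem_indepP_of_le (Set.indicator_nonneg fun i _ => greedyVec_nonneg hf.mono i)
    (Set.indicator_le_self' fun i _ => greedyVec_nonneg hf.mono i) (greedyVec_mem_baseB hσ hf).1

theorem greedyVec_add (f₁ f₂ : Finset E → ℝ) :
    greedyVec σ (f₁ + f₂) = greedyVec σ f₁ + greedyVec σ f₂ := by
  ext i
  simp only [greedyVec, Pi.add_apply]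
  ring

/-- Abel summation. -/
theorem mul_sum_le_dotProduct_of_antivary (hσ : Injective σ) {v d : E → ℝ} (hv : Antivary v σ)
    (hd : ∀ S, IsInitialSeg σ S → 0 ≤ ∑ i ∈ S, d i) {m : ℝ} (hm : ∀ i, m ≤ v i) :
    m * ∑ i, d i ≤ v ⬝ᵥ d := by
  suffices h : ∀ S, IsInitialSeg σ S →
      ∀ m : ℝ, (∀ i ∈ S, m ≤ v i) → m * ∑ i ∈ S, d i ≤ ∑ i ∈ S, v i * d i from
    h univ isInitialSeg_univ m fun i _ => hm i
  intro S hS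
  refine IsInitialSeg.induction hσ ?_ ?_ hS
  · simp
  · intro a ih m hm
    have hva := ih (v a) fun i hi => hv (mem_below.1 hi)
    have hda := hd _ (isInitialSeg_insert_below a)
    have hma := hm a (mem_insert_self a _)
    simp only [sum_insert (notMem_below_self a)] at hda ⊢
    linarith [mul_le_mul_of_nonneg_right hma hda]

theorem sum_greedyVec_sub_nonneg (hσ : Injective σ) {f : Finset E → ℝ} (hf0 : f ∅ = 0)
    {x : E → ℝ} (hx : x ∈ indepP f) {S : Finset E} (hS : IsInitialSeg σ S) :
    0 ≤ ∑ i ∈ S, (greedyVec σ f - x) i := by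
  simp only [Pi.sub_apply, sum_sub_distrib, sum_greedyVec_of_isInitialSeg hσ hf0 hS]
  exact sub_nonneg.2 (hx.2 S)

theorem dotProduct_le_greedyVec_of_mem_baseB (hσ : Injective σ) {w : E → ℝ} (hw : Antivary w σ)
    {f : Finset E → ℝ} (hf0 : f ∅ = 0) {x : E → ℝ} (hx : x ∈ baseB f) :
    w ⬝ᵥ x ≤ w ⬝ᵥ greedyVec σ f := by
  obtain ⟨m, hm⟩ := (Set.finite_range w).bddBelow
  have h := mul_sum_le_dotProduct_of_antivary hσ hw
    (fun S hS => sum_greedyVec_sub_nonneg hσ hf0 hx.1 hS) (m := m) fun i => hm ⟨i, rfl⟩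
  rw [dotProduct_sub] at h
  simp only [Pi.sub_apply, sum_sub_distrib, sum_greedyVec_of_isInitialSeg hσ hf0 isInitialSeg_univ,
    hx.2, sub_self, mul_zero] at h
  linarith

/-- As `x ≥ 0` on `indepP f`, only the positive part of `w` counts. -/
theorem dotProduct_le_indicator_greedyVec_of_mem_indepP (hσ : Injective σ) {w : E → ℝ}
    (hw : Antivary w σ) {f : Finset E → ℝ} (hf0 : f ∅ = 0) {x : E → ℝ} (hx : x ∈ indepP f) :
    w ⬝ᵥ x ≤ w ⬝ᵥ {i | 0 < w i}.indicator (greedyVec σ f) := by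
  set w' : E → ℝ := fun i => max (w i) 0
  have hw' : Antivary w' σ := fun i j h => max_le_max (hw h) le_rfl
  have h := mul_sum_le_dotProduct_of_antivary hσ hw'
    (fun S hS => sum_greedyVec_sub_nonneg hσ hf0 hx hS) (m := 0) fun i => le_max_right _ _
  rw [zero_mul, dotProduct_sub, sub_nonneg] at h
  calc w ⬝ᵥ x ≤ w' ⬝ᵥ x := sum_le_sum fun i _ =>
        mul_le_mul_of_nonneg_right (le_max_left _ _) (hx.1 i)
    _ ≤ w' ⬝ᵥ greedyVec σ f := h
    _ = w ⬝ᵥ {i | 0 < w i}.indicator (greedyVec σ f) := by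
        refine sum_congr rfl fun i _ => ?_
        by_cases hi : 0 < w i
        · simp [w', hi, hi.le]
        · simp [w', hi, le_of_not_gt hi]

end Greedy

section MinkowskiSum

variable {E : Type*} [Fintype E]

theorem mem_of_forall_exists_dotProduct_le {K : Set (E → ℝ)} (hK : IsClosed K)
    (hKc : Convex ℝ K) {x : E → ℝ} (h : ∀ w : E → ℝ, ∃ y ∈ K, w ⬝ᵥ x ≤ w ⬝ᵥ y) : x ∈ K := by
  classical
  by_contra hx
  obtain ⟨L, u, hLK, hLx⟩ := geometric_hahn_banach_closed_point hKc hK hx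
  set w : E → ℝ := fun i => L fun j => if i = j then 1 else 0
  have hL : ∀ z, L z = w ⬝ᵥ z := fun z => by
    rw [dotProduct_comm]
    exact L.toLinearMap.pi_apply_eq_sum_univ z
  obtain ⟨y, hy, hxy⟩ := h w
  linarith [hLK y hy, hL x, hL y]

variable [DecidableEq E] {f₁ f₂ : Finset E → ℝ}

theorem indepP_add (h₁ : IsPolymatroidRank f₁) (h₂ : IsPolymatroidRank f₂) :
    indepP f₁ + indepP f₂ = indepP (f₁ + f₂) := by
  refine (add_indepP_subset f₁ f₂).antisymm fun x hx => ?_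
  refine mem_of_forall_exists_dotProduct_le
    ((isCompact_indepP f₁).add (isCompact_indepP f₂)).isClosed
    ((convex_indepP f₁).add (convex_indepP f₂)) fun w => ?_
  obtain ⟨σ, hσ, hw⟩ := exists_injective_antivary w
  refine ⟨_, Set.add_mem_add (indicator_greedyVec_mem_indepP hσ h₁ {i | 0 < w i})
    (indicator_greedyVec_mem_indepP hσ h₂ {i | 0 < w i}), ?_⟩
  rw [← Set.indicator_add', ← greedyVec_add]
  exact dotProduct_le_indicator_greedyVec_of_mem_indepP hσ hw
    (by simp [h₁.map_empty, h₂.map_empty]) hx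

theorem baseB_add (h₁ : IsPolymatroidRank f₁) (h₂ : IsPolymatroidRank f₂) :
    baseB f₁ + baseB f₂ = baseB (f₁ + f₂) := by
  refine (add_baseB_subset f₁ f₂).antisymm fun x hx => ?_
  refine mem_of_forall_exists_dotProduct_le
    ((isCompact_baseB f₁).add (isCompact_baseB f₂)).isClosed
    ((convex_baseB f₁).add (convex_baseB f₂)) fun w => ?_
  obtain ⟨σ, hσ, hw⟩ := exists_injective_antivary w
  refine ⟨_, Set.add_mem_add (greedyVec_mem_baseB hσ h₁) (greedyVec_mem_baseB hσ h₂), ?_⟩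
  rw [← greedyVec_add]
  exact dotProduct_le_greedyVec_of_mem_baseB hσ hw (by simp [h₁.map_empty, h₂.map_empty]) hx

end MinkowskiSum

theorem stmt_3_general {E : Type*} [Fintype E] [DecidableEq E]
    (f₁ f₂ f : Finset E → ℝ)
    (hf₁0 : f₁ ∅ = 0) (hf₁mono : ∀ A B : Finset E, A ⊆ B → f₁ A ≤ f₁ B)
    (hf₁sub : ∀ A B : Finset E, f₁ (A ∪ B) + f₁ (A ∩ B) ≤ f₁ A + f₁ B)
    (hf₂0 : f₂ ∅ = 0) (hf₂mono : ∀ A B : Finset E, A ⊆ B → f₂ A ≤ f₂ B)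
    (hf₂sub : ∀ A B : Finset E, f₂ (A ∪ B) + f₂ (A ∩ B) ≤ f₂ A + f₂ B)
    (α : ℝ) (hα : 0 < α) :
    indepP f₁ + indepP f₂ = indepP (fun S => f₁ S + f₂ S) ∧
    baseB f₁ + baseB f₂ = baseB (fun S => f₁ S + f₂ S) ∧
    indepP (fun S => α * f S) = α • indepP f ∧
    baseB (fun S => α * f S) = α • baseB f :=
  ⟨indepP_add ⟨hf₁0, hf₁mono, hf₁sub⟩ ⟨hf₂0, hf₂mono, hf₂sub⟩,
    baseB_add ⟨hf₁0, hf₁mono, hf₁sub⟩ ⟨hf₂0, hf₂mono, hf₂sub⟩, indepP_mul hα, baseB_mul hα⟩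

/-- Minkowski sums and positive scalings of independence and base
polytopes of polymatroid rank functions. -/
theorem stmt_3 {E : Type*} [Fintype E] [DecidableEq E]
    (f₁ f₂ f : Finset E → ℝ)
    (hf₁0 : f₁ ∅ = 0) (hf₁mono : ∀ A B : Finset E, A ⊆ B → f₁ A ≤ f₁ B)
    (hf₁sub : ∀ A B : Finset E, f₁ (A ∪ B) + f₁ (A ∩ B) ≤ f₁ A + f₁ B)
    (hf₂0 : f₂ ∅ = 0) (hf₂mono : ∀ A B : Finset E, A ⊆ B → f₂ A ≤ f₂ B)
    (hf₂sub : ∀ A B : Finset E, f₂ (A ∪ B) + f₂ (A ∩ B) ≤ f₂ A + f₂ B)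
    (hf0 : f ∅ = 0) (hfmono : ∀ A B : Finset E, A ⊆ B → f A ≤ f B)
    (hfsub : ∀ A B : Finset E, f (A ∪ B) + f (A ∩ B) ≤ f A + f B)
    (α : ℝ) (hα : 0 < α) :
    indepP f₁ + indepP f₂ = indepP (fun S => f₁ S + f₂ S) ∧
    baseB f₁ + baseB f₂ = baseB (fun S => f₁ S + f₂ S) ∧
    indepP (fun S => α * f S) = α • indepP f ∧
    baseB (fun S => α * f S) = α • baseB f :=
  stmt_3_general f₁ f₂ f hf₁0 hf₁mono hf₁sub hf₂0 hf₂mono hf₂sub α hα
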